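/- Let d ≥ 1 be an integer and let A ≤ 0 be a real number. For g ∈ ℝ^d and z ∈ ℂ^d define the complex-valued map Λ_g(z) = (1−4A)^{d/4} · exp(A‖g‖₂² + √(1−4A)·(Σ_{i=1}^d g_i z_i) − (Σ_{i=1}^d z_i²)/2), where the products and exponential are taken in ℂ. Then for all u, v ∈ ℂ^d, 𝔼_{g∼N(0,I_d)}[Λ_g(u)·Λ_g(v)] = exp(Σ_{i=1}^d u_i v_i). -/

import Mathlib

/-!
The product `Λ_g(u) Λ_g(v)` factors over the coordinates of `g` into exponentials of quadratics
`2A gᵢ² + √(1-4A) (uᵢ + vᵢ) gᵢ - (uᵢ² + vᵢ²)/2`, so by Fubini its Gaussian integral is a product of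
one-dimensional Gaussian integrals. Completing the square, each of these equals
`(1-4A)^{-1/2} exp((uᵢ + vᵢ)²/2 - (uᵢ² + vᵢ²)/2) = (1-4A)^{-1/2} exp(uᵢ vᵢ)`, and the prefactor
`(1-4A)^{d/2}` cancels the normalisations.
-/

open MeasureTheory ProbabilityTheory Real

/-- The standard Gaussian probability measure `N(0, I_d)` on `ℝ^d`. -/
noncomputable def stdGaussian (d : ℕ) : Measure (EuclideanSpace ℝ (Fin d)) :=
  (Measure.pi fun _ => gaussianReal 0 1).map (MeasurableEquiv.toLp 2 (Fin d → ℝ))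

/-- The complex-valued positive random feature map
`Λ_g(z) = (1-4A)^{d/4} exp(A‖g‖² + √(1-4A)·Σ gᵢzᵢ − (Σ zᵢ²)/2)` for `g ∈ ℝ^d`, `z ∈ ℂ^d`. -/
noncomputable def lambdaC (d : ℕ) (A : ℝ) (g : EuclideanSpace ℝ (Fin d))
    (z : Fin d → ℂ) : ℂ :=
  (((1 - 4 * A) ^ ((d : ℝ) / 4) : ℝ) : ℂ) *
    Complex.exp (((A * ‖g‖ ^ 2 : ℝ) : ℂ)
      + ((Real.sqrt (1 - 4 * A) : ℝ) : ℂ) * (∑ i, (g i : ℂ) * z i)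
      - (∑ i, z i ^ 2) / 2)

lemma integral_stdGaussian_prod {𝕜 : Type*} [RCLike 𝕜] (d : ℕ) (f : Fin d → ℝ → 𝕜) :
    ∫ g, ∏ i, f i (g i) ∂(stdGaussian d) = ∏ i, ∫ x, f i x ∂(gaussianReal 0 1) := by
  -- `ProbabilityTheory.stdGaussian` is also in scope.
  rw [_root_.stdGaussian, integral_map_equiv]
  exact integral_fintype_prod_eq_prod f

lemma integral_cexp_quadratic_gaussianReal {b : ℝ} (hb : b < 1 / 2) (c e : ℂ) :
    ∫ x : ℝ, Complex.exp (b * x ^ 2 + c * x + e) ∂(gaussianReal 0 1) =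
      (√(1 - 2 * b) : ℂ)⁻¹ * Complex.exp (c ^ 2 / (2 * (1 - 2 * b)) + e) := by
  have hpos : 0 < 1 - 2 * b := by linarith
  have hdensity (x : ℝ) : gaussianPDFReal 0 1 x • Complex.exp (b * x ^ 2 + c * x + e) =
      (√(2 * π) : ℂ)⁻¹ * Complex.exp ((b - 1 / 2 : ℂ) * x ^ 2 + c * x + e) := by
    rw [gaussianPDFReal, Complex.real_smul]
    push_cast
    rw [mul_assoc, ← Complex.exp_add]
    ring_nf
  have hre : (b - 1 / 2 : ℂ).re < 0 := by simp; linarith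
  have hhalf : -(b - 1 / 2 : ℂ) = (1 - 2 * b) / 2 := by ring
  simp_rw [integral_gaussianReal_eq_integral_smul one_ne_zero, hdensity]
  rw [integral_const_mul, integral_cexp_quadratic hre, ← mul_assoc, hhalf]
  congr 1
  · have hquot : π / ((1 - 2 * b) / 2 : ℂ) = ((2 * π / (1 - 2 * b) : ℝ) : ℂ) := by
      push_cast
      field_simp
    rw [hquot, ← Complex.ofReal_ofNat, ← Complex.ofReal_one, ← Complex.ofReal_div,
      ← Complex.ofReal_cpow (by positivity), ← sqrt_eq_rpow, sqrt_div (by positivity)]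
    push_cast
    field_simp
  · rw [show 4 * (b - 1 / 2 : ℂ) = -(2 * (1 - 2 * b)) by ring, div_neg]
    ring_nf

lemma lambdaC_mul_lambdaC {d : ℕ} {A : ℝ} (hA : A ≤ 0) (g : EuclideanSpace ℝ (Fin d))
    (u v : Fin d → ℂ) :
    lambdaC d A g u * lambdaC d A g v = ∏ i, (√(1 - 4 * A) : ℂ) *
      Complex.exp ((2 * A : ℝ) * (g i) ^ 2 + √(1 - 4 * A) * (u i + v i) * g i
        + -(u i ^ 2 + v i ^ 2) / 2) := by
  have hpos : 0 < 1 - 4 * A := by linarith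
  have hprefactor :
      (1 - 4 * A) ^ ((d : ℝ) / 4) * (1 - 4 * A) ^ ((d : ℝ) / 4) = √(1 - 4 * A) ^ d := by
    rw [← rpow_add hpos, sqrt_eq_rpow, ← rpow_mul_natCast hpos.le]
    ring_nf
  rw [lambdaC, lambdaC, mul_mul_mul_comm, ← Complex.exp_add, ← Complex.ofReal_mul, hprefactor,
    Finset.prod_mul_distrib, Finset.prod_const, Finset.card_fin, ← Complex.exp_sum,
    EuclideanSpace.real_norm_sq_eq, Complex.ofReal_pow]
  congr 2
  push_cast
  simp only [Finset.mul_sum, Finset.sum_div, ← Finset.sum_add_distrib, ← Finset.sum_sub_distrib]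
  exact Finset.sum_congr rfl fun i _ => by ring

lemma integral_lambdaC_coord {A : ℝ} (hA : A ≤ 0) (a b : ℂ) :
    ∫ x : ℝ, (√(1 - 4 * A) : ℂ) * Complex.exp ((2 * A : ℝ) * x ^ 2
      + √(1 - 4 * A) * (a + b) * x + -(a ^ 2 + b ^ 2) / 2) ∂(gaussianReal 0 1) =
      Complex.exp (a * b) := by
  have hpos : 0 < 1 - 4 * A := by linarith
  have hne : (1 - 4 * A : ℂ) ≠ 0 := by exact_mod_cast hpos.ne'
  have hsqrt : (√(1 - 4 * A) : ℂ) ^ 2 = 1 - 4 * A := by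
    exact_mod_cast sq_sqrt hpos.le
  have hsqrt_ne : (√(1 - 4 * A) : ℂ) ≠ 0 := by exact_mod_cast (sqrt_pos.2 hpos).ne'
  rw [integral_const_mul, integral_cexp_quadratic_gaussianReal (by linarith),
    show 1 - 2 * (2 * A) = 1 - 4 * A by ring, ← mul_assoc, mul_inv_cancel₀ hsqrt_ne, one_mul,
    mul_pow, hsqrt]
  congr 1
  push_cast
  rw [show 2 * (1 - 2 * (2 * A : ℂ)) = (1 - 4 * A) * 2 by ring, mul_div_mul_left _ _ hne]
  ring

theorem stmt_1_general (d : ℕ) (A : ℝ) (hA : A ≤ 0) (u v : Fin d → ℂ) :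
    ∫ g, lambdaC d A g u * lambdaC d A g v ∂(stdGaussian d) =
      Complex.exp (∑ i, u i * v i) := by
  simp_rw [lambdaC_mul_lambdaC hA]
  rw [integral_stdGaussian_prod d (fun i x => (√(1 - 4 * A) : ℂ) *
      Complex.exp ((2 * A : ℝ) * x ^ 2 + √(1 - 4 * A) * (u i + v i) * x
        + -(u i ^ 2 + v i ^ 2) / 2)), Complex.exp_sum]
  exact Finset.prod_congr rfl fun i _ => integral_lambdaC_coord hA (u i) (v i)

theorem stmt_1 (d : ℕ) (hd : 1 ≤ d) (A : ℝ) (hA : A ≤ 0) (u v : Fin d → ℂ) :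
    ∫ g, lambdaC d A g u * lambdaC d A g v ∂(stdGaussian d) =
      Complex.exp (∑ i, u i * v i) :=
  stmt_1_general d A hA u v
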